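/- arXiv:1512.05087 — 2 statements merged into one kernel-verified Lean document; each statement's English description precedes it below -/
import Mathlib

section
/- For a dynamical system (X,G), the affine system (M(X),G) is irreducible if and only if (X,G) is minimal and strongly proximal. -/
open MeasureTheory Filter Topology Set

/-- The point mass `δ_x` as a probability measure. -/
noncomputable def diracPM {X : Type*} [MeasurableSpace X] (x : X) : ProbabilityMeasure X :=
  ⟨MeasureTheory.Measure.dirac x, inferInstance⟩

/-- The induced action of `g` on the space of probability measures. -/
noncomputable def smulPM {G X : Type*} [Group G] [TopologicalSpace X] [MeasurableSpace X]
    [BorelSpace X] [MulAction G X] [ContinuousConstSMul G X]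
    (g : G) (μ : ProbabilityMeasure X) : ProbabilityMeasure X :=
  μ.map (f := fun x => g • x) (continuous_const_smul g).measurable.aemeasurable

/-- The convex combination `a•μ + (1-a)•ν` of probability measures. -/
noncomputable def combPM {X : Type*} [MeasurableSpace X] (a : ℝ) (ha0 : 0 ≤ a) (ha1 : a ≤ 1)
    (μ ν : ProbabilityMeasure X) : ProbabilityMeasure X :=
  ⟨ENNReal.ofReal a • (μ : MeasureTheory.Measure X) +
      ENNReal.ofReal (1 - a) • (ν : MeasureTheory.Measure X), by
    constructor
    simp [MeasureTheory.Measure.smul_apply, measure_univ]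
    rw [← ENNReal.ofReal_add ha0 (by linarith)]
    norm_num⟩

/-!
Irreducibility puts every point mass `δ_y` into the closed convex hull of each orbit `Gμ`.
Testing against `dist(·, y)`, which vanishes only at `y`, shows that some translates `gμ` put
almost all their mass near `y`, so `δ_y` is a limit of translates of `μ`: this is strong
proximality, and for `μ = δ_x` minimality. Conversely, a closed convex invariant set contains a
limit `δ_x` of translates of any of its members, hence by minimality every point mass, hence
every finitely supported measure; these are dense, being push-forwards along finitely-valued
maps converging pointwise to the identity.
-/

open scoped BoundedContinuousFunction ProbabilityTheory NNReal
open ProbabilityTheory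

lemma diracPM_eq_diracProba (X : Type*) [MeasurableSpace X] :
    (diracPM : X → ProbabilityMeasure X) = diracProba := rfl

section Convexity

variable {X : Type*} [MeasurableSpace X]

def ConvexPM (Q : Set (ProbabilityMeasure X)) : Prop :=
  ∀ (a : ℝ) (ha0 : 0 ≤ a) (ha1 : a ≤ 1), ∀ μ ∈ Q, ∀ ν ∈ Q, combPM a ha0 ha1 μ ν ∈ Q

lemma coe_combPM (a : ℝ) (ha0 : 0 ≤ a) (ha1 : a ≤ 1) (μ ν : ProbabilityMeasure X) :
    (combPM a ha0 ha1 μ ν : Measure X)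
      = ENNReal.ofReal a • (μ : Measure X) + ENNReal.ofReal (1 - a) • (ν : Measure X) := rfl

lemma integral_combPM [TopologicalSpace X] [OpensMeasurableSpace X] (a : ℝ) (ha0 : 0 ≤ a)
    (ha1 : a ≤ 1) (μ ν : ProbabilityMeasure X) (f : X →ᵇ ℝ) :
    ∫ x, f x ∂(combPM a ha0 ha1 μ ν : Measure X)
      = a * ∫ x, f x ∂(μ : Measure X) + (1 - a) * ∫ x, f x ∂(ν : Measure X) := by
  rw [coe_combPM,
    integral_add_measure ((f.integrable _).smul_measure ENNReal.ofReal_ne_top)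
      ((f.integrable _).smul_measure ENNReal.ofReal_ne_top),
    integral_smul_measure, integral_smul_measure,
    ENNReal.toReal_ofReal ha0, ENNReal.toReal_ofReal (sub_nonneg.2 ha1), smul_eq_mul, smul_eq_mul]

lemma eq_diracPM_of_measure_compl_singleton_eq_zero [MeasurableSingletonClass X]
    {σ : ProbabilityMeasure X} {a : X} (h : (σ : Measure X) {a}ᶜ = 0) : σ = diracPM a := by
  apply ProbabilityMeasure.toMeasure_injective
  have hone : (σ : Measure X) {a} = 1 := (prob_compl_eq_zero_iff (measurableSet_singleton a)).1 h
  rw [← Measure.restrict_add_restrict_compl (μ := (σ : Measure X)) (measurableSet_singleton a),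
    Measure.restrict_eq_zero.2 h, add_zero, Measure.restrict_singleton, hone, one_smul]
  rfl

lemma combPM_diracPM_cond [MeasurableSingletonClass X] (σ : ProbabilityMeasure X) (a : X)
    (h : (σ : Measure X) {a}ᶜ ≠ 0) :
    combPM (σ {a}) (σ {a}).coe_nonneg (NNReal.coe_le_one.mpr (σ.apply_le_one _)) (diracPM a)
      (⟨(σ : Measure X)[|{a}ᶜ], cond_isProbabilityMeasure h⟩ : ProbabilityMeasure X) = σ := by
  apply ProbabilityMeasure.toMeasure_injective
  have hcompl : ENNReal.ofReal (1 - σ {a}) = (σ : Measure X) {a}ᶜ := by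
    rw [ENNReal.ofReal_sub _ (σ {a}).coe_nonneg, ENNReal.ofReal_one, ENNReal.ofReal_coe_nnreal,
      ProbabilityMeasure.ennreal_coeFn_eq_coeFn_toMeasure,
      prob_compl_eq_one_sub (measurableSet_singleton a)]
  refine (coe_combPM _ _ _ _ _).trans ?_
  rw [hcompl, ENNReal.ofReal_coe_nnreal,
    ProbabilityMeasure.ennreal_coeFn_eq_coeFn_toMeasure]
  change _ • Measure.dirac a + _ • (_⁻¹ • _) = _
  rw [← Measure.restrict_singleton, smul_smul, ENNReal.mul_inv_cancel h (measure_ne_top _ _),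
    one_smul, Measure.restrict_add_restrict_compl (measurableSet_singleton a)]

lemma ConvexPM.mem_of_measure_compl_eq_zero [MeasurableSingletonClass X]
    {Q : Set (ProbabilityMeasure X)} (hQ : ConvexPM Q) (hdirac : ∀ x, diracPM x ∈ Q)
    (s : Finset X) (σ : ProbabilityMeasure X) (hσ : (σ : Measure X) (↑s)ᶜ = 0) : σ ∈ Q := by
  classical
  induction s using Finset.induction_on generalizing σ with
  | empty => simp at hσ
  | insert a s _ ih =>
    by_cases ha : (σ : Measure X) {a}ᶜ = 0
    · rw [eq_diracPM_of_measure_compl_singleton_eq_zero ha]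
      exact hdirac a
    · rw [← combPM_diracPM_cond σ a ha]
      refine hQ _ _ _ _ (hdirac a) _ (ih _ ?_)
      rw [Finset.coe_insert, Set.insert_eq, compl_union] at hσ
      change (σ : Measure X)[|{a}ᶜ] (↑s)ᶜ = 0
      rw [cond_apply (measurableSet_singleton a).compl, hσ, mul_zero]

end Convexity

lemma ConvexPM.mem_of_isClosed {X : Type*} [MetricSpace X] [TopologicalSpace.SeparableSpace X]
    [MeasurableSpace X] [OpensMeasurableSpace X] {Q : Set (ProbabilityMeasure X)}
    (hQ : ConvexPM Q) (hQc : IsClosed Q) (hdirac : ∀ x, diracPM x ∈ Q)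
    (ν : ProbabilityMeasure X) : ν ∈ Q := by
  have : Nonempty X := nonempty_of_isProbabilityMeasure (ν : Measure X)
  let π : ℕ → SimpleFunc X X :=
    SimpleFunc.approxOn id measurable_id univ (Classical.arbitrary X) (mem_univ _)
  have hmem : ∀ n, ν.map (π n).measurable.aemeasurable ∈ Q := fun n => by
    refine hQ.mem_of_measure_compl_eq_zero hdirac (π n).range _ ?_
    rw [ProbabilityMeasure.toMeasure_map, SimpleFunc.coe_range,
      Measure.map_apply (π n).measurable (π n).finite_range.measurableSet.compl]
    simp
  have htend : Tendsto (fun n => ν.map (π n).measurable.aemeasurable) atTop (𝓝 ν) := by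
    have := (tendstoInDistribution_of_ae_tendsto (μ' := (ν : Measure X)) (Z := id)
      (fun n => (π n).measurable.aemeasurable) aemeasurable_id
      (.of_forall fun x => SimpleFunc.tendsto_approxOn _ _ (by simp))).tendsto
    simp only [Measure.map_id] at this
    exact this
  exact hQc.mem_of_tendsto htend (.of_forall hmem)

section Action

variable {G X : Type*} [Group G] [TopologicalSpace X] [MeasurableSpace X] [BorelSpace X]
  [MulAction G X] [ContinuousConstSMul G X]

lemma coe_smulPM (g : G) (μ : ProbabilityMeasure X) :
    (smulPM g μ : Measure X) = (μ : Measure X).map (g • ·) := rfl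

lemma smulPM_smulPM (g h : G) (μ : ProbabilityMeasure X) :
    smulPM g (smulPM h μ) = smulPM (g * h) μ := by
  apply ProbabilityMeasure.toMeasure_injective
  simp only [coe_smulPM]
  rw [Measure.map_map (continuous_const_smul g).measurable (continuous_const_smul h).measurable]
  simp only [Function.comp_def, mul_smul]

lemma smulPM_one (μ : ProbabilityMeasure X) : smulPM (1 : G) μ = μ := by
  apply ProbabilityMeasure.toMeasure_injective
  simp only [coe_smulPM, one_smul, Measure.map_id']

lemma smulPM_combPM (g : G) (a : ℝ) (ha0 : 0 ≤ a) (ha1 : a ≤ 1) (μ ν : ProbabilityMeasure X) :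
    smulPM g (combPM a ha0 ha1 μ ν) = combPM a ha0 ha1 (smulPM g μ) (smulPM g ν) := by
  apply ProbabilityMeasure.toMeasure_injective
  simp only [coe_smulPM, coe_combPM]
  rw [Measure.map_add _ _ (continuous_const_smul g).measurable, Measure.map_smul, Measure.map_smul]

lemma smulPM_diracPM (g : G) (x : X) : smulPM g (diracPM x) = diracPM (g • x) :=
  ProbabilityMeasure.toMeasure_injective <|
    Measure.map_dirac' (continuous_const_smul g).measurable x

lemma continuous_smulPM (g : G) : Continuous (smulPM (X := X) g) :=
  ProbabilityMeasure.continuous_map (continuous_const_smul g)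

variable (G X) in
def IrreduciblePM : Prop :=
  ∀ Q : Set (ProbabilityMeasure X), Q.Nonempty → IsClosed Q → ConvexPM Q →
    (∀ (g : G), ∀ μ ∈ Q, smulPM g μ ∈ Q) → Q = univ

lemma IrreduciblePM.le_integral_of_mem_lowerBounds (hirr : IrreduciblePM G X)
    (μ ν : ProbabilityMeasure X) (f : X →ᵇ ℝ) {c : ℝ}
    (hc : c ∈ lowerBounds (range fun g : G => ∫ x, f x ∂(smulPM g μ : Measure X))) :
    c ≤ ∫ x, f x ∂(ν : Measure X) := by
  let Q := {ν : ProbabilityMeasure X | ∀ h : G, c ≤ ∫ x, f x ∂(smulPM h ν : Measure X)}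
  have hQ : Q = univ := by
    refine hirr Q ⟨μ, fun h => hc ⟨h, rfl⟩⟩ ?_ ?_ ?_
    · simp only [Q, ofPred_forall]
      exact isClosed_iInter fun h => isClosed_le continuous_const
        ((ProbabilityMeasure.continuous_integral_boundedContinuousFunction f).comp
          (continuous_smulPM h))
    · intro a ha0 ha1 μ hμ ν hν h
      rw [smulPM_combPM, integral_combPM]
      nlinarith [hμ h, hν h]
    · intro g ν hν h
      rw [smulPM_smulPM]
      exact hν _
  simpa only [smulPM_one] using (hQ ▸ mem_univ ν : ν ∈ Q) (1 : G)

lemma forall_diracPM_mem_of_dense_orbit {Q : Set (ProbabilityMeasure X)} (hQc : IsClosed Q)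
    (hQinv : ∀ (g : G), ∀ μ ∈ Q, smulPM g μ ∈ Q) {x : X} (hx : diracPM x ∈ Q)
    (hdense : Dense (range fun g : G => g • x)) (y : X) : diracPM y ∈ Q := by
  have hclosed : IsClosed (diracPM ⁻¹' Q) := by
    rw [diracPM_eq_diracProba]
    exact hQc.preimage continuous_diracProba
  refine hclosed.closure_subset_iff.2 ?_ (hdense y)
  rintro _ ⟨g, rfl⟩
  change diracPM (g • x) ∈ Q
  exact smulPM_diracPM g x ▸ hQinv g _ hx

end Action

section Compact

variable {X : Type*} [MetricSpace X] [CompactSpace X] [MeasurableSpace X] [OpensMeasurableSpace X]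

lemma abs_integral_sub_le_of_lipschitzWith {f : X → ℝ} {L : ℝ≥0} (hf : LipschitzWith L f)
    (ν : ProbabilityMeasure X) (y : X) :
    |∫ x, f x ∂(ν : Measure X) - f y| ≤ L * ∫ x, dist x y ∂(ν : Measure X) := by
  have hdist : Integrable (fun x => dist x y) (ν : Measure X) :=
    (continuous_id.dist continuous_const).integrable_of_hasCompactSupport (.of_compactSpace _)
  have hsub : ∫ x, f x ∂(ν : Measure X) - f y = ∫ x, (f x - f y) ∂(ν : Measure X) := by
    rw [integral_sub (hf.continuous.integrable_of_hasCompactSupport (.of_compactSpace _))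
      (integrable_const _), integral_const, probReal_univ, one_smul]
  rw [hsub, ← integral_const_mul, ← Real.norm_eq_abs]
  exact norm_integral_le_of_norm_le (hdist.const_mul _) (.of_forall fun x => hf.dist_le_mul x y)

lemma tendsto_diracPM_of_tendsto_integral_dist {νs : ℕ → ProbabilityMeasure X} {y : X}
    (h : Tendsto (fun n => ∫ x, dist x y ∂(νs n : Measure X)) atTop (𝓝 0)) :
    Tendsto νs atTop (𝓝 (diracPM y)) := by
  refine tendsto_iff_forall_lipschitz_integral_tendsto.2 fun f _ ⟨L, hf⟩ => ?_
  have hdirac : ∫ x, f x ∂(diracPM y : Measure X) = f y := integral_dirac f y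
  rw [hdirac, tendsto_iff_dist_tendsto_zero]
  refine squeeze_zero (fun n => dist_nonneg) (fun n => ?_) (by simpa using h.const_mul (L : ℝ))
  exact abs_integral_sub_le_of_lipschitzWith hf (νs n) y

end Compact

lemma IrreduciblePM.exists_tendsto_diracPM {G X : Type*} [Group G] [MetricSpace X]
    [CompactSpace X] [MeasurableSpace X] [BorelSpace X] [MulAction G X] [ContinuousConstSMul G X]
    (hirr : IrreduciblePM G X) (μ : ProbabilityMeasure X) (y : X) :
    ∃ gs : ℕ → G, Tendsto (fun n => smulPM (gs n) μ) atTop (𝓝 (diracPM y)) := by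
  have hsmall : ∀ n : ℕ, ∃ g : G, ∫ x, dist x y ∂(smulPM g μ : Measure X) < 1 / (n + 1) := by
    intro n
    by_contra! h
    have := hirr.le_integral_of_mem_lowerBounds μ (diracPM y)
      (.mkOfCompact ⟨(dist · y), by fun_prop⟩) (by rintro _ ⟨g, rfl⟩; exact h g)
    have hdirac : ∫ x, dist x y ∂(diracPM y : Measure X) = 0 :=
      (integral_dirac (dist · y) y).trans (dist_self y)
    simp only [BoundedContinuousFunction.mkOfCompact_apply, ContinuousMap.coe_mk, hdirac] at this
    exact (Nat.one_div_pos_of_nat).not_ge this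
  choose gs hgs using hsmall
  exact ⟨gs, tendsto_diracPM_of_tendsto_integral_dist <|
    squeeze_zero (fun n => integral_nonneg fun _ => dist_nonneg) (fun n => (hgs n).le)
      tendsto_one_div_add_atTop_nhds_zero_nat⟩

theorem measures_irreducible_iff_minimal_stronglyProximal_general
    {G X : Type*} [Group G] [TopologicalSpace G]
    [MetricSpace X] [CompactSpace X] [MeasurableSpace X] [BorelSpace X]
    [MulAction G X] [ContinuousSMul G X] :
    (∀ Q : Set (ProbabilityMeasure X), Q.Nonempty → IsClosed Q →
      (∀ (a : ℝ) (ha0 : 0 ≤ a) (ha1 : a ≤ 1), ∀ μ ∈ Q, ∀ ν ∈ Q, combPM a ha0 ha1 μ ν ∈ Q) →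
      (∀ (g : G), ∀ μ ∈ Q, smulPM g μ ∈ Q) → Q = Set.univ) ↔
    ((∀ x : X, Dense (Set.range fun g : G => g • x)) ∧
      (∀ μ : ProbabilityMeasure X, ∃ gs : ℕ → G, ∃ x : X,
        Tendsto (fun n => smulPM (gs n) μ) atTop (𝓝 (diracPM x)))) := by
  refine ⟨fun (hirr : IrreduciblePM G X) => ⟨fun x y => ?_, fun μ => ?_⟩, fun ⟨hmin, hprox⟩ => ?_⟩
  · obtain ⟨gs, hgs⟩ := hirr.exists_tendsto_diracPM (diracPM x) y
    simp only [smulPM_diracPM] at hgs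
    rw [diracPM_eq_diracProba] at hgs
    exact mem_closure_of_tendsto (isEmbedding_diracProba.tendsto_nhds_iff.2 hgs)
      (.of_forall fun n => ⟨gs n, rfl⟩)
  · have : Nonempty X := nonempty_of_isProbabilityMeasure (μ : Measure X)
    obtain ⟨gs, hgs⟩ := hirr.exists_tendsto_diracPM μ (Classical.arbitrary X)
    exact ⟨gs, _, hgs⟩
  · intro Q ⟨μ, hμ⟩ hQc hQconv hQinv
    obtain ⟨gs, x, hgs⟩ := hprox μ
    have hx : diracPM x ∈ Q := hQc.mem_of_tendsto hgs (.of_forall fun n => hQinv _ _ hμ)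
    exact eq_univ_of_forall <| ConvexPM.mem_of_isClosed hQconv hQc
      (forall_diracPM_mem_of_dense_orbit hQc hQinv hx (hmin x))

/-- `(M(X),G)` is an irreducible affine system iff `(X,G)` is minimal and strongly
proximal. -/
theorem measures_irreducible_iff_minimal_stronglyProximal
    {G X : Type*} [Group G] [TopologicalSpace G] [IsTopologicalGroup G]
    [MetricSpace X] [CompactSpace X] [Nonempty X] [MeasurableSpace X] [BorelSpace X]
    [MulAction G X] [ContinuousSMul G X] :
    (∀ Q : Set (ProbabilityMeasure X), Q.Nonempty → IsClosed Q →
      (∀ (a : ℝ) (ha0 : 0 ≤ a) (ha1 : a ≤ 1), ∀ μ ∈ Q, ∀ ν ∈ Q, combPM a ha0 ha1 μ ν ∈ Q) →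
      (∀ (g : G), ∀ μ ∈ Q, smulPM g μ ∈ Q) → Q = Set.univ) ↔
    ((∀ x : X, Dense (Set.range fun g : G => g • x)) ∧
      (∀ μ : ProbabilityMeasure X, ∃ gs : ℕ → G, ∃ x : X,
        Tendsto (fun n => smulPM (gs n) μ) atTop (𝓝 (diracPM x)))) :=
  measures_irreducible_iff_minimal_stronglyProximal_general
end

section
/- Let (Q,G) be an irreducible affine dynamical system and let X be the closure of the set of extreme points of Q. Then X is the unique minimal subsystem of Q, and the system (X,G) is minimal and strongly proximal. -/
/-!
Irreducibility makes the closed convex hull of every nonempty invariant subset of `Q` equal to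
`Q`, so by Milman's converse of the Krein–Milman theorem every nonempty closed invariant subset
contains the extreme points of `Q`; this gives minimality and uniqueness of
`X = closure (extremePoints Q)`.

For strong proximality let `b` be the barycenter of `μ`. The closed convex hull of the orbit of
`b` is again `Q`, so an extreme point `x₀` is a limit of convex combinations `∑ wᵢ gᵢ b`, which are
the barycenters of the mixtures `∑ wᵢ (gᵢ)_* μ`. A probability measure on `Q` whose barycenter is
close to an extreme point puts almost all of its mass near that point (Milman again, plus a
Hahn–Banach separation), so one of the `(gᵢ)_* μ` does, and these translates converge to `δ_{x₀}`.
-/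

open MeasureTheory Filter Topology Set

open scoped Pointwise ENNReal

section ConvexGeometry

variable {V : Type*} [AddCommGroup V] [Module ℝ V] [TopologicalSpace V]
  [IsTopologicalAddGroup V] [ContinuousSMul ℝ V]

theorem IsCompact.convexJoin {s t : Set V} (hs : IsCompact s) (ht : IsCompact t) :
    IsCompact (_root_.convexJoin ℝ s t) := by
  have : _root_.convexJoin ℝ s t =
      (fun p : ℝ × V × V => (1 - p.1) • p.2.1 + p.1 • p.2.2) '' Icc 0 1 ×ˢ s ×ˢ t := by
    ext x
    simp only [mem_convexJoin, segment_eq_image, mem_image, mem_prod, Prod.exists]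
    constructor
    · rintro ⟨a, ha, b, hb, θ, hθ, rfl⟩
      exact ⟨θ, a, b, ⟨hθ, ha, hb⟩, rfl⟩
    · rintro ⟨θ, a, b, ⟨hθ, ha, hb⟩, rfl⟩
      exact ⟨a, ha, b, hb, θ, hθ, rfl⟩
  rw [this]
  exact (isCompact_Icc.prod (hs.prod ht)).image (by fun_prop)

theorem isCompact_convexHull_union {s t : Set V} (hs : IsCompact s) (ht : IsCompact t)
    (hsc : Convex ℝ s) (htc : Convex ℝ t) : IsCompact (convexHull ℝ (s ∪ t)) := by
  rcases s.eq_empty_or_nonempty with rfl | hsne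
  · rwa [empty_union, htc.convexHull_eq]
  rcases t.eq_empty_or_nonempty with rfl | htne
  · rwa [union_empty, hsc.convexHull_eq]
  rw [hsc.convexHull_union htc hsne htne]
  exact hs.convexJoin ht

theorem isCompact_convexHull_biUnion {ι : Type*} (t : Finset ι) {D : ι → Set V}
    (hD : ∀ i ∈ t, IsCompact (D i)) (hDc : ∀ i ∈ t, Convex ℝ (D i)) :
    IsCompact (convexHull ℝ (⋃ i ∈ t, D i)) := by
  classical
  induction t using Finset.induction with
  | empty => simp
  | insert a t _ ih =>
    simp only [Finset.mem_insert, forall_eq_or_imp] at hD hDc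
    rw [Finset.set_biUnion_insert, ← convexHull_convexHull_union_right]
    exact isCompact_convexHull_union hD.1 (ih hD.2 hDc.2) hDc.1 (convex_convexHull ℝ _)

end ConvexGeometry

theorem Set.InvOn.mapsTo_extremePoints {𝕜 E : Type*} [Ring 𝕜] [PartialOrder 𝕜] [AddRightMono 𝕜]
    [AddCommGroup E] [Module 𝕜 E] {Q : Set E} {f : E → E} {f' : E →ᵃ[𝕜] E}
    (hinv : InvOn f' f Q Q) (hf : MapsTo f Q Q) (hf' : MapsTo f' Q Q) :
    MapsTo f (Q.extremePoints 𝕜) (Q.extremePoints 𝕜) := by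
  refine fun x hx => ⟨hf hx.1, fun y₁ hy₁ y₂ hy₂ hxy => ?_⟩
  have : x ∈ openSegment 𝕜 (f' y₁) (f' y₂) := by
    rw [← image_openSegment]
    exact ⟨f x, hxy, hinv.1 hx.1⟩
  rw [← hinv.2 hy₁, hx.2 (hf' hy₁) (hf' hy₂) this]

theorem notMem_smul_add_smul_of_mem_extremePoints {𝕜 E : Type*} [Ring 𝕜] [PartialOrder 𝕜]
    [IsOrderedRing 𝕜] [AddCommGroup E] [Module 𝕜 E] {Q D : Set E} {x : E}
    (hx : x ∈ Q.extremePoints 𝕜) (hDQ : D ⊆ Q) (hxD : x ∉ D) {t : 𝕜} (ht0 : 0 < t)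
    (ht1 : t < 1) : x ∉ t • D + (1 - t) • Q := by
  rintro ⟨_, ⟨d, hd, rfl⟩, _, ⟨q, hq, rfl⟩, hdq⟩
  exact hxD (hx.2 (hDQ hd) hq ⟨t, 1 - t, ht0, sub_pos.2 ht1, add_sub_cancel t 1, hdq⟩ ▸ hd)

section Milman

variable {V : Type*} [AddCommGroup V] [Module ℝ V] [TopologicalSpace V]
  [IsTopologicalAddGroup V] [ContinuousSMul ℝ V] [LocallyConvexSpace ℝ V] [T2Space V]

theorem extremePoints_closure_convexHull_subset {A : Set V} (hA : IsClosed A)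
    (hC : IsCompact (closure (convexHull ℝ A))) :
    (closure (convexHull ℝ A)).extremePoints ℝ ⊆ A := by
  intro x hx
  by_contra hxA
  have hAC : A ⊆ closure (convexHull ℝ A) := (subset_convexHull ℝ A).trans subset_closure
  have hN : (x - ·) ⁻¹' Aᶜ ∈ 𝓝 (0 : V) :=
    (continuous_const.sub continuous_id).continuousAt.preimage_mem_nhds
      (by simpa using hA.isOpen_compl.mem_nhds hxA)
  obtain ⟨U, ⟨hU0, hUcl, -, hUconv⟩, hUA⟩ := (nhds_hasBasis_absConvex_closed ℝ V).mem_iff.mp hN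
  -- `B a` is the translate `a + U`
  set B : V → Set V := fun a => (· - a) ⁻¹' U
  have hBcl : ∀ a, IsClosed (B a) := fun a => hUcl.preimage (continuous_sub_right a)
  have hBconv : ∀ a, Convex ℝ (B a) := fun a => by
    simpa only [B, sub_eq_neg_add] using hUconv.translate_preimage_right (-a)
  obtain ⟨t, htA, hAt⟩ := (hC.of_isClosed_subset hA hAC).elim_nhds_subcover B fun a _ =>
    (continuous_sub_right a).continuousAt.preimage_mem_nhds (by simpa using hU0)
  set D : V → Set V := fun a => closure (convexHull ℝ (A ∩ B a))
  have hDB : ∀ a, D a ⊆ B a := fun a =>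
    closure_minimal (convexHull_min inter_subset_right (hBconv a)) (hBcl a)
  have hDC : ∀ a, D a ⊆ closure (convexHull ℝ A) := fun a =>
    closure_mono (convexHull_mono inter_subset_left)
  have hC' : IsCompact (convexHull ℝ (⋃ a ∈ t, D a)) :=
    isCompact_convexHull_biUnion t (fun a _ => hC.of_isClosed_subset isClosed_closure (hDC a))
      fun a _ => (convex_convexHull ℝ _).closure
  have hAD : A ⊆ ⋃ a ∈ t, D a := fun y hy => by
    obtain ⟨a, ha, hya⟩ := mem_iUnion₂.mp (hAt hy)
    exact mem_iUnion₂.mpr ⟨a, ha, subset_closure (subset_convexHull ℝ _ ⟨hy, hya⟩)⟩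
  have hCeq : closure (convexHull ℝ A) = convexHull ℝ (⋃ a ∈ t, D a) :=
    (closure_minimal (convexHull_min (hAD.trans (subset_convexHull ℝ _)) (convex_convexHull ℝ _))
      hC'.isClosed).antisymm
      (convexHull_min (iUnion₂_subset fun a _ => hDC a) (convex_convexHull ℝ A).closure)
  rw [hCeq] at hx
  obtain ⟨a, ha, hxa⟩ := mem_iUnion₂.mp (extremePoints_convexHull_subset hx)
  exact hUA (hDB a hxa) (by simpa using htA a ha)

end Milman

theorem Continuous.integrable_of_measure_compl_eq_zero {X E : Type*} [TopologicalSpace X]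
    [MeasurableSpace X] [OpensMeasurableSpace X] [T2Space X] [NormedAddCommGroup E]
    {μ : Measure X} [IsFiniteMeasure μ] {K : Set X} (hK : IsCompact K) (hμK : μ Kᶜ = 0)
    {f : X → E} (hf : Continuous f) : Integrable f μ := by
  rw [← Measure.restrict_eq_self_of_ae_mem (mem_ae_iff.2 hμK)]
  exact hf.continuousOn.integrableOn_compact hK

section Barycenter

variable {V W : Type*} [AddCommGroup V] [Module ℝ V] [TopologicalSpace V] [MeasurableSpace V]

/-- Weak barycenter: `V` carries no Bochner integral, so `b` is tested against continuous linear
functionals; integrability is part of the definition, so the junk value `∫ f = 0` of a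
non-integrable `f` cannot make `b` a barycenter. -/
def IsBarycenter (μ : Measure V) (b : V) : Prop :=
  ∀ f : V →L[ℝ] ℝ, Integrable f μ ∧ ∫ v, f v ∂μ = f b

theorem IsBarycenter.finsetSum {ι : Type*} (s : Finset ι) {μ : ι → Measure V} {b : ι → V}
    (hb : ∀ i ∈ s, IsBarycenter (μ i) (b i)) {w : ι → ℝ} (hw : ∀ i ∈ s, 0 ≤ w i) :
    IsBarycenter (∑ i ∈ s, ENNReal.ofReal (w i) • μ i) (∑ i ∈ s, w i • b i) := by
  intro f
  have hint : ∀ i ∈ s, Integrable f (ENNReal.ofReal (w i) • μ i) := fun i hi =>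
    (hb i hi f).1.smul_measure ENNReal.ofReal_ne_top
  refine ⟨integrable_finsetSum_measure.2 hint, ?_⟩
  rw [integral_finsetSum_measure hint, map_sum]
  refine Finset.sum_congr rfl fun i hi => ?_
  rw [integral_smul_measure, (hb i hi f).2, ENNReal.toReal_ofReal (hw i hi), map_smul,
    smul_eq_mul]

theorem IsBarycenter.map [IsTopologicalAddGroup V] [BorelSpace V] [AddCommGroup W] [Module ℝ W]
    [TopologicalSpace W] [MeasurableSpace W] [BorelSpace W] [IsTopologicalAddGroup W]
    {μ : Measure V} [IsProbabilityMeasure μ] {b : V} (hb : IsBarycenter μ b) {φ : V →ᵃ[ℝ] W}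
    (hφ : Continuous φ) : IsBarycenter (μ.map φ) (φ b) := by
  intro f
  let L : V →L[ℝ] W := ⟨φ.linear, AffineMap.continuous_linear_iff.mpr hφ⟩
  have hfφ : (fun v => f (φ v)) = fun v => f.comp L v + f (φ 0) := funext fun v => by
    rw [ContinuousLinearMap.comp_apply, ← map_add]
    exact congrArg f (eq_add_of_sub_eq (by simpa [L] using (φ.linearMap_vsub v 0).symm))
  obtain ⟨hL, hLb⟩ := hb (f.comp L)
  have hint : Integrable (fun v => f.comp L v + f (φ 0)) μ := hL.add (integrable_const _)
  refine ⟨(integrable_map_measure f.continuous.aestronglyMeasurable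
    hφ.measurable.aemeasurable).2 (by rwa [Function.comp_def, hfφ]), ?_⟩
  rw [integral_map hφ.measurable.aemeasurable f.continuous.aestronglyMeasurable, hfφ,
    integral_add hL (integrable_const _), integral_const, probReal_univ, one_smul]
  exact (congrArg (· + f (φ 0)) hLb).trans (congrFun hfφ b).symm

variable [BorelSpace V] [T2Space V]

theorem exists_mem_forall_mem_integral_eq {Q : Set V} (hQ : IsCompact Q) (hQc : Convex ℝ Q)
    {μ : Measure V} [IsProbabilityMeasure μ] (hμQ : μ Qᶜ = 0) (F : Finset (V →L[ℝ] ℝ)) :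
    ∃ b ∈ Q, ∀ f ∈ F, ∫ v, f v ∂μ = f b := by
  let T : V →L[ℝ] (F → ℝ) := ContinuousLinearMap.pi fun f => (f : V →L[ℝ] ℝ)
  have hT : Integrable T μ := T.continuous.integrable_of_measure_compl_eq_zero hQ hμQ
  have hQae : ∀ᵐ v ∂μ, v ∈ Q := mem_ae_iff.2 hμQ
  obtain ⟨b, hbQ, hb⟩ : ∫ v, T v ∂μ ∈ T '' Q :=
    (hQc.linear_image T.toLinearMap).integral_mem (hQ.image T.continuous).isClosed
      (hQae.mono fun v hv => mem_image_of_mem T hv) hT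
  refine ⟨b, hbQ, fun f hf => ?_⟩
  have := (ContinuousLinearMap.proj (R := ℝ) (φ := fun _ : F => ℝ) ⟨f, hf⟩).integral_comp_comm hT
  rw [← hb] at this
  exact this

theorem exists_isBarycenter {Q : Set V} (hQ : IsCompact Q) (hQc : Convex ℝ Q) {μ : Measure V}
    [IsProbabilityMeasure μ] (hμQ : μ Qᶜ = 0) : ∃ b ∈ Q, IsBarycenter μ b := by
  obtain ⟨b, hbQ, hb⟩ := hQ.inter_iInter_nonempty (fun f : V →L[ℝ] ℝ => {b | ∫ v, f v ∂μ = f b})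
    (fun f => isClosed_eq continuous_const f.continuous) fun F => by
      obtain ⟨b, hbQ, hb⟩ := exists_mem_forall_mem_integral_eq hQ hQc hμQ F
      exact ⟨b, hbQ, mem_iInter₂.2 hb⟩
  exact ⟨b, hbQ, fun f =>
    ⟨f.continuous.integrable_of_measure_compl_eq_zero hQ hμQ, mem_iInter.1 hb f⟩⟩

variable [IsTopologicalAddGroup V] [ContinuousSMul ℝ V] [LocallyConvexSpace ℝ V]

theorem IsBarycenter.mem_smul_add_smul {μ : Measure V} [IsProbabilityMeasure μ] {b : V}
    (hb : IsBarycenter μ b) {Q D : Set V} (hQ : IsCompact Q) (hQc : Convex ℝ Q) (hμQ : μ Qᶜ = 0)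
    (hD : IsCompact D) (hDc : Convex ℝ D) (hDne : D.Nonempty) (hDQ : D ⊆ Q) {t : ℝ}
    (ht : t ≤ μ.real D) : b ∈ t • D + (1 - t) • Q := by
  by_contra hbK
  obtain ⟨f, c, hfK, hcb⟩ := geometric_hahn_banach_closed_point
    ((hDc.smul t).add (hQc.smul (1 - t))) ((hD.smul t).add (hQ.smul (1 - t))).isClosed hbK
  obtain ⟨d, hd, hfd⟩ := hD.exists_isMaxOn hDne f.continuous.continuousOn
  obtain ⟨q, hq, hfq⟩ := hQ.exists_isMaxOn (hDne.mono hDQ) f.continuous.continuousOn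
  have hK : t * f d + (1 - t) * f q < c := by
    simpa using hfK _ (add_mem_add (smul_mem_smul_set hd) (smul_mem_smul_set hq))
  have hQae : ∀ᵐ v ∂μ, v ∈ Q := mem_ae_iff.2 hμQ
  have hind : Integrable (D.indicator fun _ => f q - f d) μ :=
    (integrable_const _).indicator hD.measurableSet
  have hbound : f b ≤ f q - μ.real D * (f q - f d) := calc
    f b = ∫ v, f v ∂μ := (hb f).2.symm
    _ ≤ ∫ v, (f q - D.indicator (fun _ => f q - f d) v) ∂μ := by
      refine integral_mono_ae (hb f).1 ((integrable_const _).sub hind) (hQae.mono fun v hv => ?_)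
      by_cases hvD : v ∈ D
      · simpa [indicator_of_mem hvD] using hfd hvD
      · simpa [indicator_of_notMem hvD] using hfq hv
    _ = f q - μ.real D * (f q - f d) := by
      rw [integral_sub (integrable_const _) hind, integral_const,
        integral_indicator_const _ hD.measurableSet]
      simp
  nlinarith [mul_le_mul_of_nonneg_right ht (sub_nonneg.2 (hfq (hDQ hd)))]

theorem eventually_measure_compl_lt_of_mem_extremePoints {Q : Set V} (hQ : IsCompact Q)
    (hQc : Convex ℝ Q) {x₀ : V} (hx₀ : x₀ ∈ Q.extremePoints ℝ) {U : Set V} (hU : U ∈ 𝓝 x₀)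
    {ε : ℝ} (hε : 0 < ε) :
    ∀ᶠ b in 𝓝 x₀, ∀ μ : Measure V, IsProbabilityMeasure μ → μ Qᶜ = 0 → IsBarycenter μ b →
      μ Uᶜ < ENNReal.ofReal ε := by
  set D := closure (convexHull ℝ (Q \ interior U))
  have hDQ : D ⊆ Q := closure_minimal (convexHull_min sdiff_subset hQc) hQ.isClosed
  have hD : IsCompact D := hQ.of_isClosed_subset isClosed_closure hDQ
  have hx₀D : x₀ ∉ D := fun h =>
    (extremePoints_closure_convexHull_subset (hQ.isClosed.sdiff isOpen_interior) hD
      (inter_extremePoints_subset_extremePoints_of_subset hDQ ⟨h, hx₀⟩)).2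
      (mem_interior_iff_mem_nhds.2 hU)
  set t := min ε (1 / 2)
  have ht0 : 0 < t := lt_min hε one_half_pos
  have ht1 : t < 1 := (min_le_right _ _).trans_lt one_half_lt_one
  have hK : IsCompact (t • D + (1 - t) • Q) := (hD.smul t).add (hQ.smul (1 - t))
  have hx₀K : x₀ ∉ t • D + (1 - t) • Q :=
    notMem_smul_add_smul_of_mem_extremePoints hx₀ hDQ hx₀D ht0 ht1
  filter_upwards [hK.isClosed.isOpen_compl.mem_nhds hx₀K] with b hbK μ _ hμQ hb
  by_contra! hUε
  have hUD : μ Uᶜ ≤ μ D := calc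
    μ Uᶜ ≤ μ (D ∪ Qᶜ) := measure_mono fun v hv => by
      by_cases hvQ : v ∈ Q
      · exact Or.inl (subset_closure (subset_convexHull ℝ _ ⟨hvQ, fun h => hv (interior_subset h)⟩))
      · exact Or.inr hvQ
    _ ≤ μ D + μ Qᶜ := measure_union_le _ _
    _ = μ D := by rw [hμQ, add_zero]
  have hμD : ENNReal.ofReal ε ≤ μ D := hUε.trans hUD
  refine hbK (hb.mem_smul_add_smul hQ hQc hμQ hD (convex_convexHull ℝ _).closure
    (nonempty_of_measure_ne_zero (μ := μ) ?_) hDQ ?_)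
  · exact ((ENNReal.ofReal_pos.2 hε).trans_le hμD).ne'
  · exact (min_le_left _ _).trans ((ENNReal.ofReal_le_iff_le_toReal (measure_ne_top μ D)).1 hμD)

end Barycenter

theorem exists_measure_lt_of_finsetSum_smul_lt {Ω ι : Type*} [MeasurableSpace Ω] {s : Finset ι}
    {w : ι → ℝ≥0∞} (hw : ∑ i ∈ s, w i = 1) {μ : ι → Measure Ω} {S : Set Ω} {c : ℝ≥0∞}
    (h : (∑ i ∈ s, w i • μ i) S < c) : ∃ i ∈ s, μ i S < c := by
  by_contra! hc
  refine h.not_ge ?_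
  calc c = ∑ i ∈ s, w i * c := by rw [← Finset.sum_mul, hw, one_mul]
    _ ≤ ∑ i ∈ s, w i * μ i S := Finset.sum_le_sum fun i hi => by gcongr; exact hc i hi
    _ = (∑ i ∈ s, w i • μ i) S := by simp [Measure.finsetSum_apply]

theorem exists_seq_tendsto_diracPM {Ω ι : Type*} [TopologicalSpace Ω] [MeasurableSpace Ω]
    [OpensMeasurableSpace Ω] [HasOuterApproxClosed Ω] [FirstCountableTopology Ω]
    (ν : ι → ProbabilityMeasure Ω) {x : Ω}
    (h : ∀ U ∈ 𝓝 x, ∀ ε : ℝ, 0 < ε → ∃ i, (ν i : Measure Ω) Uᶜ < ENNReal.ofReal ε) :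
    ∃ is : ℕ → ι, Tendsto (fun n => ν (is n)) atTop (𝓝 (diracPM x)) := by
  obtain ⟨u, hu⟩ := (𝓝 x).exists_antitone_basis
  choose is his using fun n : ℕ => h (u n) (hu.mem n) (1 / (n + 1)) Nat.one_div_pos_of_nat
  refine ⟨is, tendsto_of_forall_isOpen_le_liminf' fun G hG => ?_⟩
  by_cases hxG : x ∈ G
  swap
  · simp [diracPM, Measure.dirac_apply' _ hG.measurableSet, hxG]
  obtain ⟨N, hN⟩ := hu.mem_iff.1 (hG.mem_nhds hxG)
  have hGc : Tendsto (fun n => (ν (is n) : Measure Ω) Gᶜ) atTop (𝓝 0) := by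
    have hε : Tendsto (fun n : ℕ => ENNReal.ofReal (1 / (n + 1))) atTop (𝓝 0) := by
      simpa using ENNReal.tendsto_ofReal tendsto_one_div_add_atTop_nhds_zero_nat
    refine tendsto_of_tendsto_of_tendsto_of_le_of_le' tendsto_const_nhds hε
      (Eventually.of_forall fun _ => zero_le) ?_
    filter_upwards [eventually_ge_atTop N] with n hn
    exact (measure_mono (compl_subset_compl.2 ((hu.antitone hn).trans hN))).trans (his n).le
  have hG : Tendsto (fun n => (ν (is n) : Measure Ω) G) atTop (𝓝 1) := by
    simpa [← prob_compl_eq_one_sub hG.measurableSet.compl] using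
      ENNReal.Tendsto.sub tendsto_const_nhds hGc (Or.inl ENNReal.one_ne_top)
  rw [hG.liminf_eq]
  exact prob_le_one

section Proximality

variable {V : Type*} [AddCommGroup V] [Module ℝ V] [TopologicalSpace V] [MeasurableSpace V]
  [BorelSpace V] [T2Space V] [IsTopologicalAddGroup V] [ContinuousSMul ℝ V]
  [LocallyConvexSpace ℝ V]

theorem exists_map_measure_compl_lt {ι : Type*} {Q : Set V} (hQ : IsCompact Q)
    (hQc : Convex ℝ Q) (φ : ι → V →ᵃ[ℝ] V) (hφ : ∀ i, Continuous (φ i))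
    (hφQ : ∀ i, MapsTo (φ i) Q Q) {μ : Measure V} [IsProbabilityMeasure μ] (hμQ : μ Qᶜ = 0)
    {b₀ : V} (hb₀ : IsBarycenter μ b₀) {x₀ : V} (hx₀ : x₀ ∈ Q.extremePoints ℝ)
    (hx₀b₀ : x₀ ∈ closure (convexHull ℝ (range fun i => φ i b₀))) {U : Set V} (hU : U ∈ 𝓝 x₀)
    {ε : ℝ} (hε : 0 < ε) : ∃ i, μ.map (φ i) Uᶜ < ENNReal.ofReal ε := by
  obtain ⟨p, hp, hpconv⟩ := ((eventually_measure_compl_lt_of_mem_extremePoints hQ hQc hx₀ hU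
    hε).and_frequently (mem_closure_iff_frequently.1 hx₀b₀)).exists
  rw [convexHull_range_eq_exists_affineCombination] at hpconv
  obtain ⟨s, w, hw0, hw1, rfl⟩ := hpconv
  rw [s.affineCombination_eq_linear_combination _ _ hw1] at hp
  have hw1' : ∑ i ∈ s, ENNReal.ofReal (w i) = 1 := by
    rw [← ENNReal.ofReal_sum_of_nonneg hw0, hw1, ENNReal.ofReal_one]
  have hmapQ : ∀ i, μ.map (φ i) Qᶜ = 0 := fun i => by
    rw [Measure.map_apply (hφ i).measurable hQ.isClosed.measurableSet.compl]
    exact measure_mono_null (fun v hv hvQ => hv (hφQ i hvQ)) hμQ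
  have hprob : IsProbabilityMeasure (∑ i ∈ s, ENNReal.ofReal (w i) • μ.map (φ i)) := by
    constructor
    simp [Measure.finsetSum_apply, Measure.map_apply (hφ _).measurable MeasurableSet.univ, hw1']
  obtain ⟨i, -, hi⟩ := exists_measure_lt_of_finsetSum_smul_lt hw1' (hp _ hprob (by
    simp [Measure.finsetSum_apply, hmapQ]) (.finsetSum s (fun i _ => hb₀.map (hφ i)) hw0))
  exact ⟨i, hi⟩

end Proximality

theorem AffineMap.image_closure_convexHull_subset {E F : Type*} [AddCommGroup E] [Module ℝ E]
    [TopologicalSpace E] [AddCommGroup F] [Module ℝ F] [TopologicalSpace F] {f : E →ᵃ[ℝ] F}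
    (hf : Continuous f) (s : Set E) :
    f '' closure (convexHull ℝ s) ⊆ closure (convexHull ℝ (f '' s)) :=
  (image_closure_subset_closure_image hf).trans (closure_mono (f.image_convexHull s).subset)

section Dynamics

variable {V ι : Type*} [AddCommGroup V] [Module ℝ V] [TopologicalSpace V]
  [IsTopologicalAddGroup V] [ContinuousSMul ℝ V]

theorem closure_convexHull_eq_of_irreducible {Q N : Set V} (hQ : IsClosed Q) (hQc : Convex ℝ Q)
    (σ : ι → V →ᵃ[ℝ] V) (hσ : ∀ i, Continuous (σ i))
    (hirr : ∀ B ⊆ Q, B.Nonempty → IsClosed B → Convex ℝ B → (∀ i, σ i '' B ⊆ B) → B = Q)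
    (hNQ : N ⊆ Q) (hN : N.Nonempty) (hNσ : ∀ i, σ i '' N ⊆ N) :
    closure (convexHull ℝ N) = Q :=
  hirr _ (closure_minimal (convexHull_min hNQ hQc) hQ)
    (hN.mono ((subset_convexHull ℝ N).trans subset_closure)) isClosed_closure
    (convex_convexHull ℝ N).closure fun i => ((σ i).image_closure_convexHull_subset (hσ i) N).trans
      (closure_mono (convexHull_mono (hNσ i)))

theorem closure_extremePoints_subset_of_irreducible [LocallyConvexSpace ℝ V] [T2Space V]
    {Q N : Set V} (hQ : IsCompact Q) (hQc : Convex ℝ Q) (σ : ι → V →ᵃ[ℝ] V)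
    (hσ : ∀ i, Continuous (σ i))
    (hirr : ∀ B ⊆ Q, B.Nonempty → IsClosed B → Convex ℝ B → (∀ i, σ i '' B ⊆ B) → B = Q)
    (hNQ : N ⊆ Q) (hN : N.Nonempty) (hNcl : IsClosed N) (hNσ : ∀ i, σ i '' N ⊆ N) :
    closure (Q.extremePoints ℝ) ⊆ N := by
  have hNQ' := closure_convexHull_eq_of_irreducible hQ.isClosed hQc σ hσ hirr hNQ hN hNσ
  refine closure_minimal ?_ hNcl
  calc Q.extremePoints ℝ = (closure (convexHull ℝ N)).extremePoints ℝ := by rw [hNQ']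
    _ ⊆ N := extremePoints_closure_convexHull_subset hNcl (hNQ' ▸ hQ)

end Dynamics

/-- For an irreducible affine dynamical system `(Q,G)`, the closure `X` of the set of
extreme points of `Q` is the unique minimal subsystem of `Q`, and the action of `G`
on `X` is minimal and strongly proximal. -/
theorem extremePoints_closure_unique_minimal_and_stronglyProximal
    {G V : Type*} [Group G] [AddCommGroup V] [Module ℝ V] [TopologicalSpace V]
    [IsTopologicalAddGroup V] [ContinuousSMul ℝ V] [LocallyConvexSpace ℝ V]
    [TopologicalSpace.MetrizableSpace V] [MeasurableSpace V] [BorelSpace V]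
    (Q : Set V) (hQcomp : IsCompact Q) (hQne : Q.Nonempty) (hQconv : Convex ℝ Q)
    (σ : G → V →ᵃ[ℝ] V) (hσcont : ∀ g : G, Continuous (σ g))
    (hσmul : ∀ (g h : G), ∀ v ∈ Q, σ (g * h) v = σ g (σ h v))
    (hσone : ∀ v ∈ Q, σ 1 v = v)
    (hQinv : ∀ g : G, σ g '' Q = Q)
    (hirr : ∀ B ⊆ Q, B.Nonempty → IsClosed B → Convex ℝ B →
      (∀ g : G, σ g '' B ⊆ B) → B = Q) :
    -- `X := closure (extremePoints Q)` is a minimal subsystem of `Q`: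
    (closure (Q.extremePoints ℝ) ⊆ Q ∧ (closure (Q.extremePoints ℝ)).Nonempty ∧
      (∀ g : G, σ g '' closure (Q.extremePoints ℝ) ⊆ closure (Q.extremePoints ℝ)) ∧
      (∀ N ⊆ closure (Q.extremePoints ℝ), N.Nonempty → IsClosed N →
        (∀ g : G, σ g '' N ⊆ N) → N = closure (Q.extremePoints ℝ))) ∧
    -- and it is the unique minimal subsystem of `Q`:
    (∀ M ⊆ Q, M.Nonempty → IsClosed M → (∀ g : G, σ g '' M ⊆ M) →
      (∀ N ⊆ M, N.Nonempty → IsClosed N → (∀ g : G, σ g '' N ⊆ N) → N = M) →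
      M = closure (Q.extremePoints ℝ)) ∧
    -- and the action of `G` on it is strongly proximal:
    (∀ μ : ProbabilityMeasure V, μ (closure (Q.extremePoints ℝ)) = 1 →
      ∃ gs : ℕ → G, ∃ x ∈ closure (Q.extremePoints ℝ),
        Tendsto (fun n => μ.map ((hσcont (gs n)).measurable.aemeasurable))
          atTop (𝓝 (diracPM x))) := by
  have hQσ : ∀ g, MapsTo (σ g) Q Q := fun g v hv => hQinv g ▸ mem_image_of_mem _ hv
  have hσinv : ∀ g, InvOn (σ g⁻¹) (σ g) Q Q := fun g =>
    ⟨fun v hv => by rw [← hσmul _ _ v hv, inv_mul_cancel, hσone v hv],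
      fun v hv => by rw [← hσmul _ _ v hv, mul_inv_cancel, hσone v hv]⟩
  set X := closure (Q.extremePoints ℝ)
  have hXQ : X ⊆ Q := closure_minimal extremePoints_subset hQcomp.isClosed
  have hXne : X.Nonempty := (hQcomp.extremePoints_nonempty hQne).mono subset_closure
  have hXσ : ∀ g, σ g '' X ⊆ X := fun g => (image_closure_subset_closure_image (hσcont g)).trans
    (closure_mono ((hσinv g).mapsTo_extremePoints (hQσ g) (hQσ g⁻¹)).image_subset)
  have hXmin : ∀ N ⊆ Q, N.Nonempty → IsClosed N → (∀ g, σ g '' N ⊆ N) → X ⊆ N :=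
    fun N => closure_extremePoints_subset_of_irreducible (N := N) hQcomp hQconv σ hσcont hirr
  refine ⟨⟨hXQ, hXne, hXσ, fun N hNX hN hNcl hNσ =>
      hNX.antisymm (hXmin N (hNX.trans hXQ) hN hNcl hNσ)⟩,
    fun M hMQ hM hMcl hMσ hMmin =>
      (hMmin X (hXmin M hMQ hM hMcl hMσ) hXne isClosed_closure hXσ).symm,
    fun μ hμX => ?_⟩
  have hμQ : (μ : Measure V) Qᶜ = 0 := by
    refine measure_mono_null (compl_subset_compl.2 hXQ)
      ((prob_compl_eq_zero_iff isClosed_closure.measurableSet).2 ?_)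
    rw [← ProbabilityMeasure.ennreal_coeFn_eq_coeFn_toMeasure, hμX, ENNReal.coe_one]
  obtain ⟨b₀, hb₀Q, hb₀⟩ := exists_isBarycenter hQcomp hQconv hμQ
  obtain ⟨x₀, hx₀⟩ := hQcomp.extremePoints_nonempty hQne
  have horbit : closure (convexHull ℝ (range fun g => σ g b₀)) = Q :=
    closure_convexHull_eq_of_irreducible hQcomp.isClosed hQconv σ hσcont hirr
      (range_subset_iff.2 fun g => hQσ g hb₀Q) (range_nonempty _) fun g => by
        rintro _ ⟨_, ⟨h, rfl⟩, rfl⟩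
        exact ⟨g * h, hσmul g h b₀ hb₀Q⟩
  obtain ⟨gs, hgs⟩ := exists_seq_tendsto_diracPM (fun g => μ.map (hσcont g).measurable.aemeasurable)
    fun U hU ε hε => by
      simpa only [ProbabilityMeasure.toMeasure_map] using exists_map_measure_compl_lt hQcomp
        hQconv σ hσcont hQσ hμQ hb₀ hx₀ (horbit.symm ▸ hx₀.1) hU hε
  exact ⟨gs, x₀, subset_closure hx₀, hgs⟩
end
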